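/- arXiv:math/9201232 — 2 statements merged into one kernel-verified Lean document; each statement's English description precedes it below -/
import Mathlib

section
/- Let (A₀, A₁) be a compatible couple of quasi-Banach spaces and let 0 < r < 1. There is a constant c (depending only on r) such that for every x = (x_i) ∈ ℓ_r(A₀) + ℓ_∞(A₁) and every t > 0, sup { (Σ_i K_{t_i}(x_i; A₀, A₁)^r)^{1/r} : t_i ≥ 0, Σ_i t_i^r ≤ t^r } ≤ c · K_t(x; ℓ_r(A₀), ℓ_∞(A₁)). -/
open MeasureTheory ENNReal Set

/-- `IsQuasiNorm N κ` : `N` is a quasi-norm with modulus `κ` on a real vector space. -/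
def IsQuasiNorm {A : Type*} [AddCommGroup A] [Module ℝ A] (N : A → ℝ) (κ : ℝ) : Prop :=
  (∀ a, 0 ≤ N a) ∧ (∀ a, N a = 0 ↔ a = 0) ∧
  (∀ (c : ℝ) (a : A), N (c • a) = |c| * N a) ∧
  ∀ a b, N (a + b) ≤ κ * (N a + N b)

/-- The `K_t`-functional of a compatible couple of quasi-normed spaces. -/
noncomputable def Kq {V A₀ A₁ : Type*} [AddCommGroup V] [Module ℝ V]
    [AddCommGroup A₀] [Module ℝ A₀] [AddCommGroup A₁] [Module ℝ A₁]
    (N₀ : A₀ → ℝ) (N₁ : A₁ → ℝ) (j₀ : A₀ →ₗ[ℝ] V) (j₁ : A₁ →ₗ[ℝ] V)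
    (t : ℝ) (v : V) : ℝ :=
  sInf {r | ∃ (a : A₀) (b : A₁), v = j₀ a + j₁ b ∧ r = N₀ a + t * N₁ b}

/-!
For `0 < r ≤ 1` the map `s ↦ s ^ r` is subadditive, so a decomposition `x = a + b` with
`a ∈ ℓ_r(A₀)`, `b ∈ ℓ_∞(A₁)`, `M = sup ‖bᵢ‖`, gives `K_{τᵢ}(xᵢ)^r ≤ ‖aᵢ‖^r + τᵢ^r M^r` for every
`i`; summing under `Σ τᵢ^r ≤ t^r` yields `Σ K_{τᵢ}(xᵢ)^r ≤ ‖a‖^r + (t M)^r`. Taking `1/r`-th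
powers costs the factor `2^(1/r - 1)` of the quasi-triangle inequality for `s ↦ s^(1/r)`.
-/

theorem Real.rpow_add_le_mul_rpow_add_rpow {x y p : ℝ} (hx : 0 ≤ x) (hy : 0 ≤ y) (hp : 1 ≤ p) :
    (x + y) ^ p ≤ 2 ^ (p - 1) * (x ^ p + y ^ p) := by
  lift x to NNReal using hx
  lift y to NNReal using hy
  exact_mod_cast NNReal.rpow_add_le_mul_rpow_add_rpow x y hp

theorem Real.sSup_le_mul_sInf {S U : Set ℝ} {c : ℝ} (hc : 0 < c) (hU : U.Nonempty)
    (hU₀ : ∀ u ∈ U, 0 ≤ u) (h : ∀ s ∈ S, ∀ u ∈ U, s ≤ c * u) : sSup S ≤ c * sInf U := by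
  rw [← div_le_iff₀' hc]
  refine le_csInf hU fun u hu => ?_
  rw [div_le_iff₀' hc]
  exact Real.sSup_le (fun s hs => h s hs u hu) (mul_nonneg hc.le (hU₀ u hu))

theorem tsum_rpow_le_tsum_rpow_add_mul_rpow {k α τ : ℕ → ℝ} {r t M : ℝ} (hr : 0 ≤ r)
    (hr₁ : r ≤ 1) (hk : ∀ i, 0 ≤ k i) (hα : ∀ i, 0 ≤ α i) (hτ : ∀ i, 0 ≤ τ i) (hM : 0 ≤ M)
    (ht : 0 ≤ t) (hkατ : ∀ i, k i ≤ α i + τ i * M) (hk_sum : Summable fun i => k i ^ r)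
    (hα_sum : Summable fun i => α i ^ r) (hτ_sum : Summable fun i => τ i ^ r)
    (hτt : ∑' i, τ i ^ r ≤ t ^ r) :
    ∑' i, k i ^ r ≤ ∑' i, α i ^ r + (t * M) ^ r := by
  have hpointwise : ∀ i, k i ^ r ≤ α i ^ r + τ i ^ r * M ^ r := fun i =>
    calc k i ^ r ≤ (α i + τ i * M) ^ r := Real.rpow_le_rpow (hk i) (hkατ i) hr
      _ ≤ α i ^ r + (τ i * M) ^ r :=
        Real.rpow_add_le_add_rpow (hα i) (mul_nonneg (hτ i) hM) hr hr₁
      _ = α i ^ r + τ i ^ r * M ^ r := by rw [Real.mul_rpow (hτ i) hM]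
  calc ∑' i, k i ^ r ≤ ∑' i, (α i ^ r + τ i ^ r * M ^ r) :=
        hk_sum.tsum_le_tsum hpointwise (hα_sum.add (hτ_sum.mul_right _))
    _ = ∑' i, α i ^ r + (∑' i, τ i ^ r) * M ^ r := by
        rw [hα_sum.tsum_add (hτ_sum.mul_right _), tsum_mul_right]
    _ ≤ ∑' i, α i ^ r + t ^ r * M ^ r := by gcongr
    _ = ∑' i, α i ^ r + (t * M) ^ r := by rw [Real.mul_rpow ht hM]

section Kq

variable {V A₀ A₁ : Type*} [AddCommGroup V] [Module ℝ V]
  [AddCommGroup A₀] [Module ℝ A₀] [AddCommGroup A₁] [Module ℝ A₁]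
  {N₀ : A₀ → ℝ} {N₁ : A₁ → ℝ} {j₀ : A₀ →ₗ[ℝ] V} {j₁ : A₁ →ₗ[ℝ] V}

theorem Kq_nonneg (hN₀ : ∀ a, 0 ≤ N₀ a) (hN₁ : ∀ b, 0 ≤ N₁ b) {t : ℝ} (ht : 0 ≤ t) (v : V) :
    0 ≤ Kq N₀ N₁ j₀ j₁ t v := by
  refine Real.sInf_nonneg ?_
  rintro _ ⟨a, b, -, rfl⟩
  have := hN₀ a
  have := hN₁ b
  positivity

theorem Kq_le (hN₀ : ∀ a, 0 ≤ N₀ a) (hN₁ : ∀ b, 0 ≤ N₁ b) {t : ℝ} (ht : 0 ≤ t) {v : V}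
    {a : A₀} {b : A₁} (hv : v = j₀ a + j₁ b) : Kq N₀ N₁ j₀ j₁ t v ≤ N₀ a + t * N₁ b := by
  refine csInf_le ⟨0, ?_⟩ ⟨a, b, hv, rfl⟩
  rintro _ ⟨a', b', -, rfl⟩
  have := hN₀ a'
  have := hN₁ b'
  positivity

theorem rpow_tsum_rpow_Kq_le (hN₀ : ∀ a, 0 ≤ N₀ a) (hN₁ : ∀ b, 0 ≤ N₁ b) {r t : ℝ}
    (hr : 0 < r) (hr₁ : r ≤ 1) (ht : 0 ≤ t) {x : ℕ → V} {a : ℕ → A₀} {b : ℕ → A₁}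
    (ha : Summable fun i => N₀ (a i) ^ r) (hb : BddAbove (range fun i => N₁ (b i)))
    (hx : ∀ i, x i = j₀ (a i) + j₁ (b i)) {τ : ℕ → ℝ} (hτ : ∀ i, 0 ≤ τ i)
    (hτ_sum : Summable fun i => τ i ^ r) (hτt : ∑' i, τ i ^ r ≤ t ^ r)
    (hK_sum : Summable fun i => Kq N₀ N₁ j₀ j₁ (τ i) (x i) ^ r) :
    (∑' i, Kq N₀ N₁ j₀ j₁ (τ i) (x i) ^ r) ^ (1 / r) ≤
      2 ^ (1 / r - 1) * ((∑' i, N₀ (a i) ^ r) ^ (1 / r) + t * ⨆ i, N₁ (b i)) := by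
  set M := ⨆ i, N₁ (b i)
  have hM : 0 ≤ M := Real.iSup_nonneg fun i => hN₁ _
  have hK_le : ∀ i, Kq N₀ N₁ j₀ j₁ (τ i) (x i) ≤ N₀ (a i) + τ i * M := fun i =>
    (Kq_le hN₀ hN₁ (hτ i) (hx i)).trans <| by gcongr; exacts [hτ i, le_ciSup hb i]
  have hsum := tsum_rpow_le_tsum_rpow_add_mul_rpow hr.le hr₁
    (fun i => Kq_nonneg hN₀ hN₁ (hτ i) _) (fun i => hN₀ _) hτ hM ht hK_le hK_sum ha hτ_sum hτt
  have hα : 0 ≤ ∑' i, N₀ (a i) ^ r := tsum_nonneg fun i => Real.rpow_nonneg (hN₀ _) r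
  calc (∑' i, Kq N₀ N₁ j₀ j₁ (τ i) (x i) ^ r) ^ (1 / r)
      ≤ (∑' i, N₀ (a i) ^ r + (t * M) ^ r) ^ (1 / r) :=
        Real.rpow_le_rpow (tsum_nonneg fun i => Real.rpow_nonneg (Kq_nonneg hN₀ hN₁ (hτ i) _) r)
          hsum (by positivity)
    _ ≤ 2 ^ (1 / r - 1) * ((∑' i, N₀ (a i) ^ r) ^ (1 / r) + ((t * M) ^ r) ^ (1 / r)) :=
        Real.rpow_add_le_mul_rpow_add_rpow hα (by positivity) (one_le_one_div hr hr₁)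
    _ = 2 ^ (1 / r - 1) * ((∑' i, N₀ (a i) ^ r) ^ (1 / r) + t * M) := by
        rw [one_div, Real.rpow_rpow_inv (by positivity) hr.ne']

end Kq

theorem Kq_lr_linf_lower_bound_general
    {V A₀ A₁ : Type*} [AddCommGroup V] [Module ℝ V]
    [AddCommGroup A₀] [Module ℝ A₀]
    [AddCommGroup A₁] [Module ℝ A₁]
    (N₀ : A₀ → ℝ) (N₁ : A₁ → ℝ) (κ₀ κ₁ : ℝ)
    (hN₀ : IsQuasiNorm N₀ κ₀) (hN₁ : IsQuasiNorm N₁ κ₁)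
    (j₀ : A₀ →ₗ[ℝ] V) (j₁ : A₁ →ₗ[ℝ] V)
    (r : ℝ) (hr : 0 < r) (hr' : r < 1) :
    ∃ c > 0, ∀ x : ℕ → V,
      (∃ (a : ℕ → A₀) (b : ℕ → A₁), Summable (fun i => Real.rpow (N₀ (a i)) r) ∧
        BddAbove (Set.range fun i => N₁ (b i)) ∧ ∀ i, x i = j₀ (a i) + j₁ (b i)) →
      ∀ t > 0,
      sSup {s | ∃ τ : ℕ → ℝ, (∀ i, 0 ≤ τ i) ∧ Summable (fun i => Real.rpow (τ i) r) ∧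
          (∑' i, Real.rpow (τ i) r) ≤ Real.rpow t r ∧
          Summable (fun i => Real.rpow (Kq N₀ N₁ j₀ j₁ (τ i) (x i)) r) ∧
          s = Real.rpow (∑' i, Real.rpow (Kq N₀ N₁ j₀ j₁ (τ i) (x i)) r) (1/r)} ≤
      c * sInf {u | ∃ (a : ℕ → A₀) (b : ℕ → A₁),
          Summable (fun i => Real.rpow (N₀ (a i)) r) ∧
          BddAbove (Set.range fun i => N₁ (b i)) ∧
          (∀ i, x i = j₀ (a i) + j₁ (b i)) ∧
          u = Real.rpow (∑' i, Real.rpow (N₀ (a i)) r) (1/r) + t * (⨆ i, N₁ (b i))} := by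
  have hN₀' : ∀ a, 0 ≤ N₀ a := hN₀.1
  have hN₁' : ∀ b, 0 ≤ N₁ b := hN₁.1
  simp only [Real.rpow_eq_pow]
  refine ⟨2 ^ (1 / r - 1), by positivity, ?_⟩
  rintro x ⟨a₀, b₀, ha₀, hb₀, hx₀⟩ t ht
  refine Real.sSup_le_mul_sInf (by positivity) ⟨_, a₀, b₀, ha₀, hb₀, hx₀, rfl⟩ ?_ ?_
  · rintro _ ⟨a, b, -, -, -, rfl⟩
    have : 0 ≤ ⨆ i, N₁ (b i) := Real.iSup_nonneg fun i => hN₁' _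
    have : 0 ≤ ∑' i, N₀ (a i) ^ r := tsum_nonneg fun i => Real.rpow_nonneg (hN₀' _) r
    positivity
  · rintro _ ⟨τ, hτ, hτ_sum, hτt, hK_sum, rfl⟩ _ ⟨a, b, ha, hb, hx, rfl⟩
    exact rpow_tsum_rpow_Kq_le hN₀' hN₁' hr hr'.le ht.le ha hb hx hτ hτ_sum hτt hK_sum

/-- Formula (15), Remark 9: for a compatible couple of quasi-Banach spaces and `0 < r < 1`,
there is a constant `c` such that for all `x ∈ ℓ_r(A₀) + ℓ_∞(A₁)` and `t > 0`,
`sup { (Σ K_{tᵢ}(xᵢ)^r)^{1/r} : tᵢ ≥ 0, Σ tᵢ^r ≤ t^r } ≤ c · K_t(x; ℓ_r(A₀), ℓ_∞(A₁))`. -/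
theorem Kq_lr_linf_lower_bound
    {V A₀ A₁ : Type*} [AddCommGroup V] [Module ℝ V] [TopologicalSpace V]
    [IsTopologicalAddGroup V] [ContinuousSMul ℝ V] [T2Space V]
    [AddCommGroup A₀] [Module ℝ A₀] [UniformSpace A₀] [CompleteSpace A₀]
    [AddCommGroup A₁] [Module ℝ A₁] [UniformSpace A₁] [CompleteSpace A₁]
    (N₀ : A₀ → ℝ) (N₁ : A₁ → ℝ) (κ₀ κ₁ : ℝ)
    (hN₀ : IsQuasiNorm N₀ κ₀) (hN₁ : IsQuasiNorm N₁ κ₁)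
    (j₀ : A₀ →ₗ[ℝ] V) (j₁ : A₁ →ₗ[ℝ] V)
    (hi₀ : Function.Injective j₀) (hi₁ : Function.Injective j₁)
    (r : ℝ) (hr : 0 < r) (hr' : r < 1) :
    ∃ c > 0, ∀ x : ℕ → V,
      (∃ (a : ℕ → A₀) (b : ℕ → A₁), Summable (fun i => Real.rpow (N₀ (a i)) r) ∧
        BddAbove (Set.range fun i => N₁ (b i)) ∧ ∀ i, x i = j₀ (a i) + j₁ (b i)) →
      ∀ t > 0,
      sSup {s | ∃ τ : ℕ → ℝ, (∀ i, 0 ≤ τ i) ∧ Summable (fun i => Real.rpow (τ i) r) ∧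
          (∑' i, Real.rpow (τ i) r) ≤ Real.rpow t r ∧
          Summable (fun i => Real.rpow (Kq N₀ N₁ j₀ j₁ (τ i) (x i)) r) ∧
          s = Real.rpow (∑' i, Real.rpow (Kq N₀ N₁ j₀ j₁ (τ i) (x i)) r) (1/r)} ≤
      c * sInf {u | ∃ (a : ℕ → A₀) (b : ℕ → A₁),
          Summable (fun i => Real.rpow (N₀ (a i)) r) ∧
          BddAbove (Set.range fun i => N₁ (b i)) ∧
          (∀ i, x i = j₀ (a i) + j₁ (b i)) ∧
          u = Real.rpow (∑' i, Real.rpow (N₀ (a i)) r) (1/r) + t * (⨆ i, N₁ (b i))} :=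
  Kq_lr_linf_lower_bound_general N₀ N₁ κ₀ κ₁ hN₀ hN₁ j₀ j₁ r hr hr'
end

section
/- Let C be a nonempty subset of ℝⁿ closed under the following property: for every choice of nonnegative ξ = (ξ_i) with Σξ_i < 1 there exists y ∈ C with Σ_i ξ_i y_i < 1. Then for every ε > 0 the convex hull of C intersects the open set (−∞, 1+ε)ⁿ; that is, there exist finitely many points y¹,…,y^M ∈ C and nonnegative λ₁,…,λ_M with Σλ_m = 1 such that Σ_m λ_m y^m_i < 1 + ε for every coordinate i = 1,…,n. -/
open Finset

/-!
Suppose the convex hull of `C` missed the open convex box `(−∞, 1 + ε)ⁿ`. Hahn–Banach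
separates them by a linear functional `x ↦ c ⬝ᵥ x`; being bounded above on the box, it has
`c ≥ 0`. Rescaling `c` to total mass `1 / (1 + ε/2) < 1`, the hypothesis yields `y ∈ C` with
`c ⬝ᵥ y < c ⬝ᵥ (1 + ε/2, …, 1 + ε/2)`, although the separation puts every point of the box
strictly below every point of `C`.
-/

lemma exists_fin_of_mem_convexHull {R E : Type*} [Field R] [LinearOrder R] [IsStrictOrderedRing R]
    [AddCommGroup E] [Module R E] {s : Set E} {x : E} (hx : x ∈ convexHull R s) :
    ∃ (M : ℕ) (z : Fin M → E) (w : Fin M → R),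
      (∀ m, z m ∈ s) ∧ (∀ m, 0 ≤ w m) ∧ ∑ m, w m = 1 ∧ ∑ m, w m • z m = x := by
  obtain ⟨ι, _, w, z, hw₀, hw₁, hz, rfl⟩ := mem_convexHull_iff_exists_fintype.1 hx
  let e := Fintype.equivFin ι
  exact ⟨_, z ∘ e.symm, w ∘ e.symm, fun m => hz _, fun m => hw₀ _,
    (e.symm.sum_comp w).trans hw₁, e.symm.sum_comp fun i => w i • z i⟩

lemma LinearMap.exists_eq_dotProduct {ι R : Type*} [Fintype ι] [CommSemiring R]
    (f : (ι → R) →ₗ[R] R) : ∃ c : ι → R, ∀ x, f x = c ⬝ᵥ x := by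
  classical
  refine ⟨fun i => f fun j => if i = j then 1 else 0, fun x => ?_⟩
  simp only [f.pi_apply_eq_sum_univ x, dotProduct, smul_eq_mul, mul_comm]

section

variable {ι : Type*} [Fintype ι]

lemma nonneg_of_dotProduct_lt_on_box {a c : ι → ℝ} {u : ℝ}
    (h : ∀ x ∈ Set.univ.pi fun i => Set.Iio (a i), c ⬝ᵥ x < u) (i : ι) : 0 ≤ c i := by
  classical
  by_contra! hci
  set x₀ : ι → ℝ := fun j => a j - 1
  have hx₀ : x₀ ∈ Set.univ.pi fun i => Set.Iio (a i) := fun j _ => by simp [x₀]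
  -- moving from `x₀` in direction `-eᵢ` stays in the box and raises `c ⬝ᵥ x` up to `u`
  set t := (u - c ⬝ᵥ x₀) / -c i
  have ht : 0 ≤ t := div_nonneg (sub_nonneg.2 (h x₀ hx₀).le) (neg_nonneg.2 hci.le)
  have hmem : x₀ - Pi.single i t ∈ Set.univ.pi fun i => Set.Iio (a i) := fun j _ =>
    (sub_le_self _ ((Pi.single_nonneg (α := fun _ => ℝ)).2 ht j)).trans_lt (hx₀ j trivial)
  have hval : c ⬝ᵥ (x₀ - Pi.single i t) = u := by
    rw [dotProduct_sub, dotProduct_single, mul_div_assoc', div_neg,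
      mul_div_cancel_left₀ _ hci.ne]
    ring
  exact (h _ hmem).ne hval

lemma exists_nonneg_dotProduct_separating {C : Set (ι → ℝ)} {a : ι → ℝ}
    (hdisj : Disjoint (convexHull ℝ C) (Set.univ.pi fun i => Set.Iio (a i))) :
    ∃ c : ι → ℝ, (∀ i, 0 ≤ c i) ∧
      ∀ x ∈ Set.univ.pi (fun i => Set.Iio (a i)), ∀ y ∈ C, c ⬝ᵥ x < c ⬝ᵥ y := by
  obtain ⟨f, u, hf_box, hf_hull⟩ := geometric_hahn_banach_open
    (convex_pi fun _ _ => convex_Iio _) (isOpen_set_pi Set.finite_univ fun _ _ => isOpen_Iio)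
    (convex_convexHull ℝ C) hdisj.symm
  obtain ⟨c, hc⟩ : ∃ c : ι → ℝ, ∀ x, f x = c ⬝ᵥ x :=
    (f : (ι → ℝ) →ₗ[ℝ] ℝ).exists_eq_dotProduct
  refine ⟨c, nonneg_of_dotProduct_lt_on_box fun x hx => hc x ▸ hf_box x hx,
    fun x hx y hy => ?_⟩
  rw [← hc, ← hc]
  exact (hf_box x hx).trans_le (hf_hull y (subset_convexHull ℝ C hy))

lemma exists_mem_dotProduct_le {C : Set (ι → ℝ)}
    (h : ∀ ξ : ι → ℝ, (∀ i, 0 ≤ ξ i) → ∑ i, ξ i < 1 → ∃ y ∈ C, ξ ⬝ᵥ y < 1)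
    {c : ι → ℝ} (hc : ∀ i, 0 ≤ c i) {t : ℝ} (ht : 1 < t) :
    ∃ y ∈ C, c ⬝ᵥ y ≤ t * ∑ i, c i := by
  rcases (sum_nonneg fun i _ => hc i).eq_or_lt with hs | hs
  · have hc0 : c = 0 :=
      funext fun i => (sum_eq_zero_iff_of_nonneg fun i _ => hc i).1 hs.symm i (mem_univ i)
    obtain ⟨y, hy, -⟩ := h 0 (fun _ => le_rfl) (by simp)
    exact ⟨y, hy, by simp [hc0]⟩
  · have hts : 0 < t * ∑ i, c i := mul_pos (by linarith) hs
    obtain ⟨y, hy, hlt⟩ := h ((t * ∑ i, c i)⁻¹ • c)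
      (fun i => smul_nonneg (inv_nonneg.2 hts.le) (hc i))
      (by simp only [Pi.smul_apply, smul_eq_mul, ← mul_sum, inv_mul_lt_one₀ hts]
          exact lt_mul_of_one_lt_left hs ht)
    rw [smul_dotProduct, smul_eq_mul, inv_mul_lt_one₀ hts] at hlt
    exact ⟨y, hy, hlt.le⟩

end

theorem convexHull_meets_of_separation_general {n : ℕ} (C : Set (Fin n → ℝ))
    (h : ∀ ξ : Fin n → ℝ, (∀ i, 0 ≤ ξ i) → (∑ i, ξ i) < 1 →
      ∃ y ∈ C, (∑ i, ξ i * y i) < 1) :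
    ∀ ε > 0, ∃ (M : ℕ) (y : Fin M → (Fin n → ℝ)) (lam : Fin M → ℝ),
      (∀ m, y m ∈ C) ∧ (∀ m, 0 ≤ lam m) ∧ (∑ m, lam m) = 1 ∧
      ∀ i, (∑ m, lam m * y m i) < 1 + ε := by
  intro ε hε
  by_contra! hcon
  have hdisj : Disjoint (convexHull ℝ C) (Set.univ.pi fun _ => Set.Iio (1 + ε)) := by
    refine Set.disjoint_left.2 fun x hx hx_box => ?_
    obtain ⟨M, y, lam, hy, hlam, hsum, rfl⟩ := exists_fin_of_mem_convexHull hx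
    obtain ⟨i, hi⟩ := hcon M y lam hy hlam hsum
    exact hi.not_gt (by simpa [Finset.sum_apply] using hx_box i (Set.mem_univ i))
  obtain ⟨c, hc, hsep⟩ := exists_nonneg_dotProduct_separating hdisj
  obtain ⟨y, hy, hle⟩ := exists_mem_dotProduct_le h hc (lt_add_of_pos_right 1 (half_pos hε))
  have hmid : (fun _ => 1 + ε / 2) ∈ Set.univ.pi fun _ : Fin n => Set.Iio (1 + ε) :=
    fun _ _ => by simp only [Set.mem_Iio]; linarith
  refine (hsep _ hmid y hy).not_ge (hle.trans_eq ?_)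
  simp only [dotProduct, sum_mul, mul_comm]

/-- The Hahn–Banach / minimax separation step in the proof of Theorem 1: if `C ⊆ ℝⁿ` is
nonempty and for every nonnegative `ξ` with `Σ ξᵢ < 1` some `y ∈ C` has `Σ ξᵢ yᵢ < 1`,
then for every `ε > 0` there is a convex combination of points of `C` lying in
`(−∞, 1 + ε)ⁿ`. -/
theorem convexHull_meets_of_separation {n : ℕ} (C : Set (Fin n → ℝ)) (hC : C.Nonempty)
    (h : ∀ ξ : Fin n → ℝ, (∀ i, 0 ≤ ξ i) → (∑ i, ξ i) < 1 →
      ∃ y ∈ C, (∑ i, ξ i * y i) < 1) :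
    ∀ ε > 0, ∃ (M : ℕ) (y : Fin M → (Fin n → ℝ)) (lam : Fin M → ℝ),
      (∀ m, y m ∈ C) ∧ (∀ m, 0 ≤ lam m) ∧ (∑ m, lam m) = 1 ∧
      ∀ i, (∑ m, lam m * y m i) < 1 + ε :=
  convexHull_meets_of_separation_general C h
end
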